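/- arXiv:2003.13598 — 3 statements merged into one kernel-verified Lean document; each statement's English description precedes it below -/
import Mathlib

section
/- Let G be a connected bipartite graph with parts A and B such that every vertex in A has degree a ≥ 2 and every vertex in B has degree b with a ≤ b. Let e_1 = {u_1,v_1} and e_2 = {u_2,v_2} be edges with u_1,u_2 ∈ A, v_1,v_2 ∈ B. Suppose G − e_2 is connected and π is a graph isomorphism from G − e_1 to G − e_2. Then π maps the edge e_1 to the edge e_2, i.e., {π(u_1), π(v_1)} = {u_2, v_2}; in particular π is an automorphism of G mapping e_1 to e_2. -/
/-!
The degrees of `G - e` are those of `G`, lowered by one at the two ends of `e`, and an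
isomorphism `π : G - e₁ ≃ G - e₂` preserves them. Since `a ≤ b`, the only vertices of degree
`a - 1` in `G - e₂` are `u₂` and, when `a = b`, also `v₂`; this settles the case `a = b`. When
`a < b`, `π u₁ = u₂`, and `π v₁` can only fail to be `v₂` by landing in `A`. But then every
neighbour of `v₁` in `G - e₁`, a vertex of `A` of degree at most `a`, is sent to a neighbour of
`π v₁` in `B` of degree less than `b`, that is to `v₂`; by injectivity `v₁` would have degree at
most `1`, whereas it has degree `b - 1 ≥ a ≥ 2`. Once `e₁` goes to `e₂`, `π` is an isomorphism
of the full graphs.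
-/

open MeasureTheory Finset Filter
open scoped Classical

/-- Homomorphism density of a symmetric kernel `h` in a finite graph `G`:
`t_G(h) = ∫_{[0,1]^V} ∏_{{i,j} ∈ E(G)} h(x_i, x_j) dx`. -/
noncomputable def tG {V : Type} [Fintype V] (G : SimpleGraph V) (h : ℝ → ℝ → ℝ)
    (hsym : ∀ a b, h a b = h b a) : ℝ :=
  ∫ x : V → Set.Icc (0:ℝ) 1,
    ∏ e ∈ G.edgeFinset, Sym2.lift ⟨fun i j => h (x i) (x j), fun _ _ => hsym _ _⟩ e

namespace SimpleGraph

variable {V W : Type*} {G : SimpleGraph V}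

lemma adj_iff_deleteEdges_adj_or_eq {e : Sym2 V} (he : e ∈ G.edgeSet) {x y : V} :
    G.Adj x y ↔ (G.deleteEdges {e}).Adj x y ∨ s(x, y) = e := by
  rw [deleteEdges_adj, Set.mem_singleton_iff]
  constructor
  · intro h
    by_cases hxy : s(x, y) = e <;> tauto
  · rintro (⟨h, -⟩ | rfl)
    · exact h
    · exact he

theorem Iso.adj_iff_of_deleteEdges {H : SimpleGraph W} {e₁ : Sym2 V} {e₂ : Sym2 W}
    (he₁ : e₁ ∈ G.edgeSet) (he₂ : e₂ ∈ H.edgeSet) (π : G.deleteEdges {e₁} ≃g H.deleteEdges {e₂})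
    (hπ : e₁.map π = e₂) (x y : V) : G.Adj x y ↔ H.Adj (π x) (π y) := by
  have hedge : s(π x, π y) = e₂ ↔ s(x, y) = e₁ := by
    rw [← (Sym2.map.injective π.injective).eq_iff (a := s(x, y)), Sym2.map_mk, hπ]
  rw [adj_iff_deleteEdges_adj_or_eq he₁, adj_iff_deleteEdges_adj_or_eq he₂, π.map_adj_iff, hedge]

section Finite

variable [Fintype V]

lemma neighborFinset_deleteEdges_singleton (e : Sym2 V) (w : V) :
    (G.deleteEdges {e}).neighborFinset w = (G.neighborFinset w).filter (s(w, ·) ≠ e) := by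
  ext
  simp

lemma degree_deleteEdges_singleton_of_notMem {e : Sym2 V} {w : V} (hw : w ∉ e) :
    (G.deleteEdges {e}).degree w = G.degree w := by
  rw [← card_neighborFinset_eq_degree, ← card_neighborFinset_eq_degree,
    neighborFinset_deleteEdges_singleton, Finset.filter_true_of_mem]
  rintro x - rfl
  exact hw (Sym2.mem_mk_left w x)

lemma Adj.degree_deleteEdges_left {u v : V} (h : G.Adj u v) :
    (G.deleteEdges {s(u, v)}).degree u = G.degree u - 1 := by
  rw [← card_neighborFinset_eq_degree, ← card_neighborFinset_eq_degree,
    neighborFinset_deleteEdges_singleton,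
    ← Finset.card_erase_of_mem ((G.mem_neighborFinset _ _).2 h)]
  simp_rw [ne_eq, Sym2.congr_right]
  rw [Finset.filter_ne']

lemma Adj.degree_deleteEdges_right {u v : V} (h : G.Adj u v) :
    (G.deleteEdges {s(u, v)}).degree v = G.degree v - 1 := by
  rw [Sym2.eq_swap]
  exact h.symm.degree_deleteEdges_left

end Finite

structure IsBiregularBipartition [Fintype V] (G : SimpleGraph V) (A B : Set V) (a b : ℕ) :
    Prop where
  mem_or_mem (v : V) : v ∈ A ∨ v ∈ B
  disjoint (v : V) : ¬(v ∈ A ∧ v ∈ B)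
  mem_and_mem_of_adj {u v : V} : G.Adj u v → u ∈ A ∧ v ∈ B ∨ u ∈ B ∧ v ∈ A
  degree_of_mem_left : ∀ u ∈ A, G.degree u = a
  degree_of_mem_right : ∀ v ∈ B, G.degree v = b

namespace IsBiregularBipartition

variable [Fintype V] {A B : Set V} {a b : ℕ} {u v w : V}

lemma mem_right_of_adj (hG : G.IsBiregularBipartition A B a b) (h : G.Adj u v) (hu : u ∈ A) :
    v ∈ B :=
  (hG.mem_and_mem_of_adj h).elim And.right fun h' => absurd ⟨hu, h'.1⟩ (hG.disjoint u)

lemma mem_left_of_adj (hG : G.IsBiregularBipartition A B a b) (h : G.Adj u v) (hu : u ∈ B) :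
    v ∈ A :=
  (hG.mem_and_mem_of_adj h).elim (fun h' => absurd ⟨h'.1, hu⟩ (hG.disjoint u)) And.right

lemma degree_deleteEdges_of_mem_left (hG : G.IsBiregularBipartition A B a b) (hv : v ∈ B)
    (hw : w ∈ A) (hwu : w ≠ u) :
    (G.deleteEdges {s(u, v)}).degree w = a := by
  have hwv : w ≠ v := fun h => hG.disjoint w ⟨hw, h ▸ hv⟩
  rw [degree_deleteEdges_singleton_of_notMem (by simp [hwu, hwv]), hG.degree_of_mem_left w hw]

lemma degree_deleteEdges_of_mem_right (hG : G.IsBiregularBipartition A B a b) (hu : u ∈ A)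
    (hw : w ∈ B) (hwv : w ≠ v) :
    (G.deleteEdges {s(u, v)}).degree w = b := by
  have hwu : w ≠ u := fun h => hG.disjoint w ⟨h ▸ hu, hw⟩
  rw [degree_deleteEdges_singleton_of_notMem (by simp [hwu, hwv]), hG.degree_of_mem_right w hw]

lemma eq_of_degree_deleteEdges_eq_pred (hG : G.IsBiregularBipartition A B a b) (hu : u ∈ A)
    (hv : v ∈ B) (ha : 1 ≤ a) (hab : a ≤ b) (huv : G.Adj u v)
    (hw : (G.deleteEdges {s(u, v)}).degree w = a - 1) : w = u ∨ w = v ∧ a = b := by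
  rcases hG.mem_or_mem w with hwA | hwB
  · refine .inl (by_contra fun hwu => ?_)
    rw [hG.degree_deleteEdges_of_mem_left hv hwA hwu] at hw
    omega
  · by_cases hwv : w = v
    · subst hwv
      rw [huv.degree_deleteEdges_right, hG.degree_of_mem_right w hv] at hw
      exact .inr ⟨rfl, by omega⟩
    · rw [hG.degree_deleteEdges_of_mem_right hu hwB hwv] at hw
      omega

lemma eq_of_mem_right_of_degree_deleteEdges_eq_pred (hG : G.IsBiregularBipartition A B a b)
    (hu : u ∈ A) (hb : 1 ≤ b) (hw : w ∈ B)
    (hd : (G.deleteEdges {s(u, v)}).degree w = b - 1) : w = v := by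
  by_contra hwv
  rw [hG.degree_deleteEdges_of_mem_right hu hw hwv] at hd
  omega

lemma degree_le_one_of_iso_of_mem_left (hG : G.IsBiregularBipartition A B a b) (hu : u ∈ A)
    (hab : a < b) {H : SimpleGraph V} [DecidableRel H.Adj] (hH : H ≤ G)
    (π : H ≃g G.deleteEdges {s(u, v)}) {x : V} (hx : x ∈ B) (hπx : π x ∈ A) :
    H.degree x ≤ 1 := by
  have hmaps : Set.MapsTo π (H.neighborFinset x) ({v} : Finset V) := by
    intro y hy
    have hxy : H.Adj x y := (H.mem_neighborFinset x y).1 hy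
    have hyA : y ∈ A := hG.mem_left_of_adj (hH hxy) hx
    have hπxy : G.Adj (π x) (π y) := deleteEdges_le _ (π.map_adj_iff.2 hxy)
    have hπyB : π y ∈ B := hG.mem_right_of_adj hπxy hπx
    by_contra hπyv
    have hdeg : H.degree y ≤ G.degree y := degree_le_of_le hH
    rw [← π.degree_eq, hG.degree_deleteEdges_of_mem_right hu hπyB (by simpa using hπyv),
      hG.degree_of_mem_left y hyA] at hdeg
    omega
  rw [← card_neighborFinset_eq_degree]
  exact Finset.card_le_card_of_injOn π hmaps π.injective.injOn

theorem map_edge_of_iso_deleteEdges (hG : G.IsBiregularBipartition A B a b) (ha : 2 ≤ a)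
    (hab : a ≤ b) {u₁ v₁ u₂ v₂ : V} (hu₁ : u₁ ∈ A) (hv₁ : v₁ ∈ B) (hu₂ : u₂ ∈ A) (hv₂ : v₂ ∈ B)
    (he₁ : G.Adj u₁ v₁) (he₂ : G.Adj u₂ v₂)
    (π : G.deleteEdges {s(u₁, v₁)} ≃g G.deleteEdges {s(u₂, v₂)}) :
    s(π u₁, π v₁) = s(u₂, v₂) := by
  have hdu : (G.deleteEdges {s(u₂, v₂)}).degree (π u₁) = a - 1 := by
    rw [π.degree_eq, he₁.degree_deleteEdges_left, hG.degree_of_mem_left _ hu₁]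
  have hdv : (G.deleteEdges {s(u₂, v₂)}).degree (π v₁) = b - 1 := by
    rw [π.degree_eq, he₁.degree_deleteEdges_right, hG.degree_of_mem_right _ hv₁]
  rcases hab.eq_or_lt with rfl | hlt
  · have hπu := hG.eq_of_degree_deleteEdges_eq_pred hu₂ hv₂ (by omega) le_rfl he₂ hdu
    have hπv := hG.eq_of_degree_deleteEdges_eq_pred hu₂ hv₂ (by omega) le_rfl he₂ hdv
    rw [eq_comm, ← Sym2.mem_and_mem_iff (π.injective.ne he₁.ne)]
    exact ⟨Sym2.mem_iff.2 (hπu.imp_right And.left), Sym2.mem_iff.2 (hπv.imp_right And.left)⟩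
  · obtain hπu | ⟨-, rfl⟩ := hG.eq_of_degree_deleteEdges_eq_pred hu₂ hv₂ (by omega) hab he₂ hdu
    · have hπv : π v₁ ∈ B := (hG.mem_or_mem _).resolve_left fun hA => by
        have := hG.degree_le_one_of_iso_of_mem_left hu₂ hlt (deleteEdges_le _) π hv₁ hA
        rw [he₁.degree_deleteEdges_right, hG.degree_of_mem_right _ hv₁] at this
        omega
      rw [hπu, hG.eq_of_mem_right_of_degree_deleteEdges_eq_pred hu₂ (by omega) hπv hdv]
    · exact (lt_irrefl a hlt).elim

end IsBiregularBipartition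

end SimpleGraph

theorem iso_of_deleted_maps_edge_general {V : Type} [Fintype V] (G : SimpleGraph V) (A B : Set V)
    (hcover : ∀ v, v ∈ A ∨ v ∈ B) (hdisj : ∀ v, ¬(v ∈ A ∧ v ∈ B))
    (hbip : ∀ u v, G.Adj u v → (u ∈ A ∧ v ∈ B) ∨ (u ∈ B ∧ v ∈ A))
    (a b : ℕ) (ha2 : 2 ≤ a) (hab : a ≤ b)
    (hdegA : ∀ u ∈ A, G.degree u = a) (hdegB : ∀ v ∈ B, G.degree v = b)
    (u₁ v₁ u₂ v₂ : V) (hu₁ : u₁ ∈ A) (hv₁ : v₁ ∈ B) (hu₂ : u₂ ∈ A) (hv₂ : v₂ ∈ B)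
    (he₁ : G.Adj u₁ v₁) (he₂ : G.Adj u₂ v₂)
    (π : G.deleteEdges {s(u₁, v₁)} ≃g G.deleteEdges {s(u₂, v₂)}) :
    s(π u₁, π v₁) = s(u₂, v₂) ∧ ∀ x y, G.Adj x y ↔ G.Adj (π x) (π y) := by
  have hG : G.IsBiregularBipartition A B a b := ⟨hcover, hdisj, hbip _ _, hdegA, hdegB⟩
  have hπ := hG.map_edge_of_iso_deleteEdges ha2 hab hu₁ hv₁ hu₂ hv₂ he₁ he₂ π
  exact ⟨hπ, π.adj_iff_of_deleteEdges he₁ he₂ (by rwa [Sym2.map_mk])⟩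

/-- an isomorphism `G - e₁ ≃ G - e₂` must carry `e₁` to `e₂`, and hence is
an automorphism of `G` mapping `e₁` to `e₂`. -/
theorem iso_of_deleted_maps_edge {V : Type} [Fintype V] (G : SimpleGraph V) (A B : Set V)
    (hcover : ∀ v, v ∈ A ∨ v ∈ B) (hdisj : ∀ v, ¬(v ∈ A ∧ v ∈ B))
    (hbip : ∀ u v, G.Adj u v → (u ∈ A ∧ v ∈ B) ∨ (u ∈ B ∧ v ∈ A))
    (a b : ℕ) (ha2 : 2 ≤ a) (hab : a ≤ b)
    (hdegA : ∀ u ∈ A, G.degree u = a) (hdegB : ∀ v ∈ B, G.degree v = b)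
    (hconn : G.Connected)
    (u₁ v₁ u₂ v₂ : V) (hu₁ : u₁ ∈ A) (hv₁ : v₁ ∈ B) (hu₂ : u₂ ∈ A) (hv₂ : v₂ ∈ B)
    (he₁ : G.Adj u₁ v₁) (he₂ : G.Adj u₂ v₂)
    (hconn₂ : (G.deleteEdges {s(u₂, v₂)}).Connected)
    (π : G.deleteEdges {s(u₁, v₁)} ≃g G.deleteEdges {s(u₂, v₂)}) :
    s(π u₁, π v₁) = s(u₂, v₂) ∧ ∀ x y, G.Adj x y ↔ G.Adj (π x) (π y) :=
  iso_of_deleted_maps_edge_general G A B hcover hdisj hbip a b ha2 hab hdegA hdegB u₁ v₁ u₂ v₂ hu₁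
    hv₁ hu₂ hv₂ he₁ he₂ π
end

section
/- Suppose G is a finite graph with edges e_1,...,e_k such that the Cauchy–Schwarz-type inequality t_G(h_1,...,h_k)^k ≤ ∏_{l=1}^k t_G(h_l) holds for all bounded measurable symmetric nonnegative h_1,...,h_k on [0,1]^2. Then for every bounded measurable symmetric nonnegative h separated from zero (h ≥ δ > 0 everywhere) and every pair of edges e_1, e_2, one has t_{G−e_1}(h) = t_{G−e_2}(h). -/
open MeasureTheory Finset Filter
open scoped Classical

/-- Multilinear homomorphism density: edge `e` carries the symmetric kernel `H e`. -/
noncomputable def tGm {V : Type} [Fintype V] (G : SimpleGraph V) (H : Sym2 V → ℝ → ℝ → ℝ)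
    (hsym : ∀ e a b, H e a b = H e b a) : ℝ :=
  ∫ x : V → Set.Icc (0:ℝ) 1,
    ∏ e ∈ G.edgeFinset, Sym2.lift ⟨fun i j => H e (x i) (x j), fun _ _ => hsym e _ _⟩ e

/-!
Perturb the kernel on a single edge `e` to `h + t`. The Hölder property gives
`(t_G(h) + t·t_{G−e}(h))^k ≤ t_G(h + t)·t_G(h)^(k−1)` for `t ≥ −δ`, with equality at `t = 0`, and
`t ↦ t_G(h + t)` is a polynomial. So the difference of the two sides has a local minimum at `t = 0`,
and its derivative there vanishes: after cancelling `t_G(h)^(k−1) ≥ δ^(k(k−1)) > 0` this reads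
`k·t_{G−e}(h) = (d/dt) t_G(h + t)|_{t=0}`, whose right-hand side does not depend on `e`.
-/

section FinsetProduct

variable {α ι : Type*} [MeasurableSpace α] {μ : Measure α} {s : Finset ι} {f : ι → α → ℝ}
  {M : ℝ}

lemma integrable_finset_prod_of_abs_le [IsFiniteMeasure μ] (hf : ∀ i, Measurable (f i))
    (hM : ∀ i x, |f i x| ≤ M) : Integrable (fun x => ∏ i ∈ s, f i x) μ := by
  refine .of_bound (s.measurable_prod fun i _ => hf i).aestronglyMeasurable (M ^ s.card)
    (ae_of_all _ fun x => ?_)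
  rw [Real.norm_eq_abs, Finset.abs_prod, ← Finset.prod_const]
  exact Finset.prod_le_prod (fun _ _ => abs_nonneg _) fun i _ => hM i x

lemma pow_le_integral_finset_prod [IsProbabilityMeasure μ] {c : ℝ} (hc : 0 ≤ c)
    (hcf : ∀ i x, c ≤ f i x) (hf : ∀ i, Measurable (f i)) (hM : ∀ i x, |f i x| ≤ M) :
    c ^ s.card ≤ ∫ x, ∏ i ∈ s, f i x ∂μ := by
  calc c ^ s.card = ∫ _x, c ^ s.card ∂μ := by simp
    _ ≤ ∫ x, ∏ i ∈ s, f i x ∂μ :=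
      integral_mono (integrable_const _) (integrable_finset_prod_of_abs_le hf hM) fun x => by
        simpa using Finset.prod_le_prod (fun _ _ => hc) fun i (_ : i ∈ s) => hcf i x

lemma integral_finset_prod_add_const [IsFiniteMeasure μ] [DecidableEq ι]
    (hf : ∀ i, Measurable (f i)) (hM : ∀ i x, |f i x| ≤ M) (t : ℝ) :
    ∫ x, ∏ i ∈ s, (f i x + t) ∂μ =
      ∑ u ∈ s.powerset, (∫ x, ∏ i ∈ u, f i x ∂μ) * t ^ (s \ u).card := by
  simp_rw [Finset.prod_add, Finset.prod_const]
  rw [integral_finsetSum _ fun u _ => (integrable_finset_prod_of_abs_le hf hM).mul_const _]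
  simp_rw [integral_mul_const]

lemma differentiable_integral_finset_prod_add_const [IsFiniteMeasure μ]
    (hf : ∀ i, Measurable (f i)) (hM : ∀ i x, |f i x| ≤ M) :
    Differentiable ℝ fun t => ∫ x, ∏ i ∈ s, (f i x + t) ∂μ := by
  classical
  simp_rw [integral_finset_prod_add_const hf hM]
  fun_prop

end FinsetProduct

section Graph

variable {V : Type} {k : ℝ → ℝ → ℝ} {hk : ∀ a b, k a b = k b a}

noncomputable def kernelAt (k : ℝ → ℝ → ℝ) (hk : ∀ a b, k a b = k b a) (e : Sym2 V)
    (x : V → Set.Icc (0:ℝ) 1) : ℝ :=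
  Sym2.lift ⟨fun i j => k (x i) (x j), fun _ _ => hk _ _⟩ e

lemma exists_kernelAt_eq (e : Sym2 V) (x : V → Set.Icc (0:ℝ) 1) :
    ∃ a b, kernelAt k hk e x = k a b := by
  induction e using Sym2.ind with
  | _ i j => exact ⟨_, _, rfl⟩

lemma abs_kernelAt_le {M : ℝ} (hM : ∀ a b, |k a b| ≤ M) (e : Sym2 V)
    (x : V → Set.Icc (0:ℝ) 1) : |kernelAt k hk e x| ≤ M := by
  obtain ⟨a, b, hab⟩ := exists_kernelAt_eq (hk := hk) e x
  exact hab ▸ hM a b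

lemma le_kernelAt {c : ℝ} (hc : ∀ a b, c ≤ k a b) (e : Sym2 V) (x : V → Set.Icc (0:ℝ) 1) :
    c ≤ kernelAt k hk e x := by
  obtain ⟨a, b, hab⟩ := exists_kernelAt_eq (hk := hk) e x
  exact hab ▸ hc a b

lemma measurable_kernelAt (hmeas : Measurable (Function.uncurry k)) (e : Sym2 V) :
    Measurable (kernelAt k hk e) := by
  induction e using Sym2.ind with
  | _ i j =>
    exact hmeas.comp ((measurable_subtype_coe.comp (measurable_pi_apply i)).prodMk
      (measurable_subtype_coe.comp (measurable_pi_apply j)))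

variable [Fintype V] {G : SimpleGraph V}

lemma tG_eq_integral_prod_kernelAt :
    tG G k hk = ∫ x, ∏ e ∈ G.edgeFinset, kernelAt k hk e x := rfl

lemma tG_deleteEdges_singleton (e : Sym2 V) :
    tG (G.deleteEdges {e}) k hk = ∫ x, ∏ f ∈ G.edgeFinset.erase e, kernelAt k hk f x := by
  refine integral_congr_ae (ae_of_all _ fun x => Finset.prod_congr ?_ fun _ _ => rfl)
  ext f
  simp [and_comm]

lemma tG_add_const (t : ℝ) (hkt : ∀ a b, k a b + t = k b a + t) :
    tG G (fun a b => k a b + t) hkt = ∫ x, ∏ e ∈ G.edgeFinset, (kernelAt k hk e x + t) := by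
  refine integral_congr_ae (ae_of_all _ fun x => Finset.prod_congr rfl fun e _ => ?_)
  induction e using Sym2.ind with
  | _ i j => rfl

lemma tG_congr_kernel {k' : ℝ → ℝ → ℝ} (hk' : ∀ a b, k' a b = k' b a) (h : k = k') :
    tG G k hk = tG G k' hk' := by
  subst h; rfl

end Graph

section Perturbation

variable {V : Type} [Fintype V] {G : SimpleGraph V} {k : ℝ → ℝ → ℝ}
  {hk : ∀ a b, k a b = k b a} {e : Sym2 V} {t M : ℝ}

def HasHolderProperty (G : SimpleGraph V) : Prop :=
  ∀ (H : Sym2 V → ℝ → ℝ → ℝ) (hs : ∀ e a b, H e a b = H e b a),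
    (∀ e, Measurable (Function.uncurry (H e))) → (∀ e, ∃ M, ∀ x y, |H e x y| ≤ M) →
    (∀ e x y, 0 ≤ H e x y) →
    tGm G H hs ^ G.edgeFinset.card ≤ ∏ e ∈ G.edgeFinset, tG G (H e) (hs e)

lemma tGm_update_add_const (hmeas : Measurable (Function.uncurry k)) (hM : ∀ a b, |k a b| ≤ M)
    (he : e ∈ G.edgeFinset)
    (hs : ∀ f a b, Function.update (fun _ => k) e (fun a b => k a b + t) f a b =
      Function.update (fun _ => k) e (fun a b => k a b + t) f b a) :
    tGm G (Function.update (fun _ => k) e fun a b => k a b + t) hs =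
      tG G k hk + t * tG (G.deleteEdges {e}) k hk := by
  have hlift : ∀ f x, Sym2.lift ⟨fun i j => Function.update (fun _ => k) e
      (fun a b => k a b + t) f (x i) (x j), fun _ _ => hs f _ _⟩ f =
        if f = e then kernelAt k hk f x + t else kernelAt k hk f x := by
    intro f x
    induction f using Sym2.ind with
    | _ i j => simp only [Sym2.lift_mk, Function.update_apply]; split_ifs <;> rfl
  have hprod : ∀ x, ∏ f ∈ G.edgeFinset,
      (if f = e then kernelAt k hk f x + t else kernelAt k hk f x) =
        ∏ f ∈ G.edgeFinset, kernelAt k hk f x +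
          t * ∏ f ∈ G.edgeFinset.erase e, kernelAt k hk f x := by
    intro x
    rw [← mul_prod_erase _ _ he, ← mul_prod_erase _ (kernelAt k hk · x) he, if_pos rfl,
      prod_congr rfl fun f hf => if_neg (ne_of_mem_erase hf)]
    ring
  have hint (S : Finset (Sym2 V)) :
      Integrable fun x : V → Set.Icc (0:ℝ) 1 => ∏ f ∈ S, kernelAt k hk f x :=
    integrable_finset_prod_of_abs_le (measurable_kernelAt hmeas) (abs_kernelAt_le hM)
  simp only [tGm, hlift, hprod]
  rw [integral_add (hint _) ((hint _).const_mul t), integral_const_mul,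
    tG_eq_integral_prod_kernelAt, tG_deleteEdges_singleton]

lemma pow_le_of_hasHolderProperty (hG : HasHolderProperty G)
    (hmeas : Measurable (Function.uncurry k)) (hM : ∀ a b, |k a b| ≤ M)
    (hk0 : ∀ a b, 0 ≤ k a b) (hkt : ∀ a b, 0 ≤ k a b + t) (he : e ∈ G.edgeFinset) :
    (tG G k hk + t * tG (G.deleteEdges {e}) k hk) ^ G.edgeFinset.card ≤
      (∫ x, ∏ f ∈ G.edgeFinset, (kernelAt k hk f x + t)) *
        tG G k hk ^ (G.edgeFinset.card - 1) := by
  set H := Function.update (fun _ => k) e fun a b => k a b + t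
  have hs (f : Sym2 V) (a b : ℝ) : H f a b = H f b a := by
    simp only [H, Function.update_apply]
    split_ifs <;> simp [hk a b]
  have hHolder := hG H hs
    (fun f => by
      simp only [H, Function.update_apply]
      split_ifs
      exacts [hmeas.add_const t, hmeas])
    (fun f => by
      simp only [H, Function.update_apply]
      split_ifs
      · exact ⟨M + |t|, fun a b => (abs_add_le _ _).trans (add_le_add_left (hM a b) _)⟩
      · exact ⟨M, hM⟩)
    (fun f a b => by simp only [H, Function.update_apply]; split_ifs; exacts [hkt a b, hk0 a b])
  rwa [tGm_update_add_const (hk := hk) hmeas hM he, ← mul_prod_erase _ _ he,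
    prod_congr rfl fun f hf =>
      tG_congr_kernel hk (Function.update_of_ne (ne_of_mem_erase hf) _ _),
    prod_const, card_erase_of_mem he,
    tG_congr_kernel (hk := hs e) (k' := fun a b => k a b + t) (fun a b => by rw [hk a b])
      (Function.update_self _ _ _), tG_add_const] at hHolder

lemma deriv_integral_prod_kernelAt_add_const (hG : HasHolderProperty G)
    (hmeas : Measurable (Function.uncurry k)) (hM : ∀ a b, |k a b| ≤ M) {δ : ℝ} (hδ : 0 < δ)
    (hsep : ∀ a b, δ ≤ k a b) (he : e ∈ G.edgeFinset) :
    deriv (fun t => ∫ x, ∏ f ∈ G.edgeFinset, (kernelAt k hk f x + t)) 0 =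
      G.edgeFinset.card * tG (G.deleteEdges {e}) k hk := by
  set n := G.edgeFinset.card
  set A := tG G k hk
  set B := tG (G.deleteEdges {e}) k hk
  set Φ := fun t => ∫ x, ∏ f ∈ G.edgeFinset, (kernelAt k hk f x + t)
  have hn : n - 1 + 1 = n := Nat.sub_add_cancel (card_pos.2 ⟨e, he⟩)
  have hA : 0 < A := (pow_pos hδ n).trans_le <|
    pow_le_integral_finset_prod (f := kernelAt k hk) hδ.le (le_kernelAt hsep)
      (measurable_kernelAt hmeas) (abs_kernelAt_le hM)
  have hΦ0 : Φ 0 = A := by simp [Φ, A, tG_eq_integral_prod_kernelAt]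
  have hmin : IsLocalMin (fun t => Φ t * A ^ (n - 1) - (A + t * B) ^ n) 0 := by
    filter_upwards [Ioi_mem_nhds (neg_neg_of_pos hδ)] with t ht
    have := pow_le_of_hasHolderProperty (hk := hk) (t := t) hG hmeas hM
      (fun a b => hδ.le.trans (hsep a b)) (fun a b => by linarith [hsep a b, Set.mem_Ioi.1 ht]) he
    simp only [hΦ0, zero_mul, add_zero, ← pow_succ', hn, sub_self]
    linarith
  have hderiv : HasDerivAt (fun t => Φ t * A ^ (n - 1) - (A + t * B) ^ n)
      (deriv Φ 0 * A ^ (n - 1) - n * (A + 0 * B) ^ (n - 1) * (1 * B)) 0 :=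
    ((differentiable_integral_finset_prod_add_const (measurable_kernelAt hmeas)
      (abs_kernelAt_le hM) 0).hasDerivAt.mul_const _).sub
      ((((hasDerivAt_id 0).mul_const B).const_add A).pow n)
  have := hmin.hasDerivAt_eq_zero hderiv
  rw [zero_mul, add_zero, one_mul] at this
  exact mul_right_cancel₀ (pow_pos hA _).ne' (by linarith)

end Perturbation

/-- if `G` satisfies the weakly-norming (Hölder-type) inequality, then for every
kernel separated from zero, deleting any single edge yields the same density. -/
theorem deleted_densities_eq_of_separated {V : Type} [Fintype V] (G : SimpleGraph V)
    (hwn : ∀ (H : Sym2 V → ℝ → ℝ → ℝ) (hs : ∀ e a b, H e a b = H e b a),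
      (∀ e, Measurable (Function.uncurry (H e))) → (∀ e, ∃ M, ∀ x y, |H e x y| ≤ M) →
      (∀ e x y, 0 ≤ H e x y) →
      tGm G H hs ^ G.edgeFinset.card ≤ ∏ e ∈ G.edgeFinset, tG G (H e) (hs e))
    (h : ℝ → ℝ → ℝ) (hsym : ∀ a b, h a b = h b a)
    (hmeas : Measurable (Function.uncurry h)) (hbdd : ∃ M, ∀ x y, |h x y| ≤ M)
    (δ : ℝ) (hδ : 0 < δ) (hsep : ∀ x y, δ ≤ h x y) :
    ∀ e₁ ∈ G.edgeSet, ∀ e₂ ∈ G.edgeSet,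
      tG (G.deleteEdges {e₁}) h hsym = tG (G.deleteEdges {e₂}) h hsym := by
  intro e₁ he₁ e₂ he₂
  obtain ⟨M, hM⟩ := hbdd
  have hcard : (G.edgeFinset.card : ℝ) ≠ 0 :=
    Nat.cast_ne_zero.2 (card_ne_zero_of_mem (G.mem_edgeFinset.2 he₁))
  refine mul_left_cancel₀ hcard ?_
  rw [← deriv_integral_prod_kernelAt_add_const hwn hmeas hM hδ hsep (G.mem_edgeFinset.2 he₁),
    ← deriv_integral_prod_kernelAt_add_const hwn hmeas hM hδ hsep (G.mem_edgeFinset.2 he₂)]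
end

section
/- Let G be a finite graph with edges e_1,...,e_k and suppose t_G(h_1,...,h_k)^k ≤ ∏_{l=1}^k t_G(h_l) for all bounded measurable symmetric nonnegative h_1,...,h_k (G weakly norming), and suppose additionally that graphs F, F' satisfying t_F(h) = t_{F'}(h) for all nonnegative bounded symmetric measurable h are isomorphic. Then all the single-edge-deleted graphs G − e_1, ..., G − e_k are pairwise isomorphic. -/
open MeasureTheory Finset Filter
open scoped Classical

/-!
Perturb one edge `e` of a kernel `W ≥ δ > 0` by a constant `s`. Weak norming bounds
`(t_G(W) + s·t_{G-e}(W))^k` by `t_G(W + s)·t_G(W)^{k-1}`, with equality at `s = 0`, so the two sides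
have the same derivative at `s = 0`: `k·t_G(W)^{k-1}·t_{G-e}(W) = t_G(W)^{k-1}·(d/ds) t_G(W + s)`.
The right side does not depend on `e`, so all `t_{G-e}(W)` coincide. For a nonnegative kernel `h`,
`t_{G-e}(h + δ)` is a polynomial in `δ`; these polynomials agree for `δ > 0`, hence at `δ = 0`.
Lovász uniqueness turns equal densities into isomorphic graphs.
-/

open scoped Topology Polynomial

theorem HasDerivAt.eq_of_eventuallyLE_of_eq {f g : ℝ → ℝ} {f' g' a : ℝ}
    (hf : HasDerivAt f f' a) (hg : HasDerivAt g g' a) (hle : f ≤ᶠ[𝓝 a] g) (heq : f a = g a) :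
    f' = g' := by
  have hmin : IsLocalMin (fun x => g x - f x) a := by
    filter_upwards [hle] with x hx
    simp only [heq, sub_self, sub_nonneg, hx]
  linarith [hmin.hasDerivAt_eq_zero (hg.sub hf)]

theorem Finset.prod_add_ite_eq_of_mem {ι R : Type*} [CommSemiring R] [DecidableEq ι]
    {s : Finset ι} {e : ι} (he : e ∈ s) (a : ι → R) (t : R) :
    ∏ i ∈ s, (a i + if i = e then t else 0) = ∏ i ∈ s, a i + t * ∏ i ∈ s.erase e, a i := by
  rw [← Finset.mul_prod_erase s _ he, ← Finset.mul_prod_erase s a he, if_pos rfl,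
    Finset.prod_congr rfl fun i hi => by rw [if_neg (Finset.ne_of_mem_erase hi), add_zero]]
  ring

namespace HomDensity

variable {V : Type}

/-- Symmetrized so that it needs no symmetry proof; for symmetric `h` it is the factor of the
edge `e` in `t_G(h)` (`lift_eq_weight`). -/
noncomputable def weight (h : ℝ → ℝ → ℝ) (x : V → Set.Icc (0:ℝ) 1) (e : Sym2 V) : ℝ :=
  Sym2.lift ⟨fun i j => (h (x i) (x j) + h (x j) (x i)) / 2,
    fun _ _ => by dsimp only; rw [add_comm]⟩ e

@[simp]
theorem weight_mk (h : ℝ → ℝ → ℝ) (x : V → Set.Icc (0:ℝ) 1) (i j : V) :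
    weight h x s(i, j) = (h (x i) (x j) + h (x j) (x i)) / 2 :=
  rfl

theorem lift_eq_weight (h : ℝ → ℝ → ℝ) (hsym : ∀ a b, h a b = h b a)
    (x : V → Set.Icc (0:ℝ) 1) (e : Sym2 V) :
    Sym2.lift ⟨fun i j => h (x i) (x j), fun _ _ => hsym _ _⟩ e = weight h x e := by
  induction e using Sym2.ind with
  | _ i j => rw [weight_mk, Sym2.lift_mk, hsym (x j) (x i)]; ring

theorem measurable_weight {h : ℝ → ℝ → ℝ} (hm : Measurable (Function.uncurry h)) (e : Sym2 V) :
    Measurable fun x : V → Set.Icc (0:ℝ) 1 => weight h x e := by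
  induction e using Sym2.ind with
  | _ i j =>
    have coord (k : V) : Measurable fun x : V → Set.Icc (0:ℝ) 1 => (x k : ℝ) :=
      measurable_subtype_coe.comp (measurable_pi_apply k)
    exact ((hm.comp ((coord i).prodMk (coord j))).add
      (hm.comp ((coord j).prodMk (coord i)))).div_const 2

theorem abs_weight_le {h : ℝ → ℝ → ℝ} {M : ℝ} (hM : ∀ a b, |h a b| ≤ M)
    (x : V → Set.Icc (0:ℝ) 1) (e : Sym2 V) : |weight h x e| ≤ M := by
  induction e using Sym2.ind with
  | _ i j =>
    rw [weight_mk, abs_div, abs_two]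
    linarith [hM (x i) (x j), hM (x j) (x i), abs_add_le (h (x i) (x j)) (h (x j) (x i))]

theorem le_weight {h : ℝ → ℝ → ℝ} {c : ℝ} (hc : ∀ a b, c ≤ h a b)
    (x : V → Set.Icc (0:ℝ) 1) (e : Sym2 V) : c ≤ weight h x e := by
  induction e using Sym2.ind with
  | _ i j => rw [weight_mk]; linarith [hc (x i) (x j), hc (x j) (x i)]

theorem weight_add_const (h : ℝ → ℝ → ℝ) (δ : ℝ) (x : V → Set.Icc (0:ℝ) 1) (e : Sym2 V) :
    weight (fun a b => h a b + δ) x e = weight h x e + δ := by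
  induction e using Sym2.ind with
  | _ i j => simp only [weight_mk]; ring

variable [Fintype V]

/-- The homomorphism density of the edge set `s`, so that
`t_{G-e}(h) = density (G.edgeFinset.erase e) h`. -/
noncomputable def density (s : Finset (Sym2 V)) (h : ℝ → ℝ → ℝ) : ℝ :=
  ∫ x : V → Set.Icc (0:ℝ) 1, ∏ e ∈ s, weight h x e

theorem integrable_prod_weight (s : Finset (Sym2 V)) {h : ℝ → ℝ → ℝ}
    (hm : Measurable (Function.uncurry h)) (hb : ∃ M, ∀ a b, |h a b| ≤ M) :
    MeasureTheory.Integrable fun x : V → Set.Icc (0:ℝ) 1 => ∏ e ∈ s, weight h x e := by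
  obtain ⟨M, hM⟩ := hb
  refine (MeasureTheory.integrable_const (M ^ s.card)).mono'
    (Finset.measurable_prod s fun e _ => measurable_weight hm e).aestronglyMeasurable
    (Filter.Eventually.of_forall fun x => ?_)
  rw [Real.norm_eq_abs, Finset.abs_prod, ← Finset.prod_const]
  exact Finset.prod_le_prod (fun e _ => abs_nonneg _) fun e _ => abs_weight_le hM x e

theorem tG_eq_density (G : SimpleGraph V) (h : ℝ → ℝ → ℝ) (hsym : ∀ a b, h a b = h b a) :
    tG G h hsym = density G.edgeFinset h := by
  simp only [tG, density, lift_eq_weight h hsym]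

theorem tGm_eq_integral (G : SimpleGraph V) (H : Sym2 V → ℝ → ℝ → ℝ)
    (hs : ∀ e a b, H e a b = H e b a) :
    tGm G H hs = ∫ x : V → Set.Icc (0:ℝ) 1, ∏ e ∈ G.edgeFinset, weight (H e) x e := by
  simp only [tGm, lift_eq_weight _ (hs _)]

theorem pow_card_le_density (s : Finset (Sym2 V)) {h : ℝ → ℝ → ℝ}
    (hm : Measurable (Function.uncurry h)) (hb : ∃ M, ∀ a b, |h a b| ≤ M)
    {δ : ℝ} (hδ : 0 ≤ δ) (hge : ∀ a b, δ ≤ h a b) : δ ^ s.card ≤ density s h := by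
  have hconst : ∫ _ : V → Set.Icc (0:ℝ) 1, δ ^ s.card = δ ^ s.card := by simp
  rw [← hconst, ← Finset.prod_const]
  exact MeasureTheory.integral_mono (MeasureTheory.integrable_const _)
    (integrable_prod_weight s hm hb) fun x =>
      Finset.prod_le_prod (fun _ _ => hδ) fun e _ => le_weight hge x e

/-- The polynomial `δ ↦ density s (h + δ)` (`density_add_const`). -/
noncomputable def shiftPoly (s : Finset (Sym2 V)) (h : ℝ → ℝ → ℝ) : ℝ[X] :=
  ∑ T ∈ s.powerset, Polynomial.C (density T h) * Polynomial.X ^ (s \ T).card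

theorem density_add_const (s : Finset (Sym2 V)) {h : ℝ → ℝ → ℝ}
    (hm : Measurable (Function.uncurry h)) (hb : ∃ M, ∀ a b, |h a b| ≤ M) (δ : ℝ) :
    density s (fun a b => h a b + δ) = (shiftPoly s h).eval δ := by
  have hexpand (x : V → Set.Icc (0:ℝ) 1) : ∏ e ∈ s, weight (fun a b => h a b + δ) x e =
      ∑ T ∈ s.powerset, (∏ e ∈ T, weight h x e) * δ ^ (s \ T).card := by
    simp only [weight_add_const, Finset.prod_add, Finset.prod_const]
  simp only [density, shiftPoly, hexpand, Polynomial.eval_finsetSum, Polynomial.eval_mul,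
    Polynomial.eval_C, Polynomial.eval_pow, Polynomial.eval_X]
  rw [MeasureTheory.integral_finsetSum _ fun T _ => (integrable_prod_weight T hm hb).mul_const _]
  exact Finset.sum_congr rfl fun T _ => MeasureTheory.integral_mul_const _ _

theorem shiftPoly_eval_zero (s : Finset (Sym2 V)) {h : ℝ → ℝ → ℝ}
    (hm : Measurable (Function.uncurry h)) (hb : ∃ M, ∀ a b, |h a b| ≤ M) :
    (shiftPoly s h).eval 0 = density s h := by
  simpa only [add_zero] using (density_add_const s hm hb 0).symm

end HomDensity

open HomDensity

def IsWeaklyNorming {V : Type} [Fintype V] (G : SimpleGraph V) : Prop :=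
  ∀ (H : Sym2 V → ℝ → ℝ → ℝ) (hs : ∀ e a b, H e a b = H e b a),
    (∀ e, Measurable (Function.uncurry (H e))) → (∀ e, ∃ M, ∀ x y, |H e x y| ≤ M) →
    (∀ e x y, 0 ≤ H e x y) →
    tGm G H hs ^ G.edgeFinset.card ≤ ∏ e ∈ G.edgeFinset, tG G (H e) (hs e)

namespace IsWeaklyNorming

variable {V : Type} [Fintype V] {G : SimpleGraph V} {W : ℝ → ℝ → ℝ} {δ : ℝ}

theorem perturb_edge_le (hwn : IsWeaklyNorming G) {e : Sym2 V} (he : e ∈ G.edgeFinset)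
    (hsym : ∀ a b, W a b = W b a) (hm : Measurable (Function.uncurry W))
    (hb : ∃ M, ∀ a b, |W a b| ≤ M) (hδ : 0 < δ) (hge : ∀ a b, δ ≤ W a b)
    {s : ℝ} (hs : |s| ≤ δ) :
    (density G.edgeFinset W + s * density (G.edgeFinset.erase e) W) ^ G.edgeFinset.card ≤
      (shiftPoly G.edgeFinset W).eval s *
        density G.edgeFinset W ^ (G.edgeFinset.card - 1) := by
  obtain ⟨M, hM⟩ := hb
  set c : Sym2 V → ℝ := fun e' => if e' = e then s else 0
  have hc (e' : Sym2 V) : |c e'| ≤ δ := by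
    by_cases h : e' = e <;> simp [c, h, hs, hδ.le]
  have hineq := hwn (fun e' a b => W a b + c e') (fun e' a b => by rw [hsym])
    (fun _ => hm.add_const _) (fun e' => ⟨M + δ, fun a b => (abs_add_le _ _).trans
      (add_le_add (hM a b) (hc e'))⟩)
    (fun e' a b => by linarith [hge a b, (abs_le.mp (hc e')).1])
  have hlhs : tGm G (fun e' a b => W a b + c e') (fun e' a b => by rw [hsym]) =
      density G.edgeFinset W + s * density (G.edgeFinset.erase e) W := by
    simp only [tGm_eq_integral, weight_add_const, c, Finset.prod_add_ite_eq_of_mem he]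
    rw [MeasureTheory.integral_add (integrable_prod_weight _ hm ⟨M, hM⟩)
      ((integrable_prod_weight _ hm ⟨M, hM⟩).const_mul s), MeasureTheory.integral_const_mul]
    rfl
  have hrhs (e' : Sym2 V) : tG G (fun a b => W a b + c e') (fun a b => by rw [hsym]) =
      (shiftPoly G.edgeFinset W).eval (c e') := by
    rw [tG_eq_density, density_add_const _ hm ⟨M, hM⟩]
  rw [hlhs, Finset.prod_congr rfl fun e' _ => hrhs e', ← Finset.mul_prod_erase _ _ he,
    Finset.prod_congr rfl fun e' he' => by
      rw [show c e' = 0 from if_neg (Finset.ne_of_mem_erase he')],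
    Finset.prod_const, Finset.card_erase_of_mem he, shiftPoly_eval_zero _ hm ⟨M, hM⟩] at hineq
  simpa [c] using hineq

theorem card_mul_density_erase (hwn : IsWeaklyNorming G) {e : Sym2 V} (he : e ∈ G.edgeFinset)
    (hsym : ∀ a b, W a b = W b a) (hm : Measurable (Function.uncurry W))
    (hb : ∃ M, ∀ a b, |W a b| ≤ M) (hδ : 0 < δ) (hge : ∀ a b, δ ≤ W a b) :
    (G.edgeFinset.card : ℝ) * density (G.edgeFinset.erase e) W =
      (shiftPoly G.edgeFinset W).derivative.eval 0 := by
  set k := G.edgeFinset.card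
  set t := density G.edgeFinset W
  have hk : k ≠ 0 := Finset.card_ne_zero.mpr ⟨e, he⟩
  have ht : 0 < t := (pow_pos hδ _).trans_le (pow_card_le_density _ hm hb hδ.le hge)
  have hlhs : HasDerivAt (fun s => (t + s * density (G.edgeFinset.erase e) W) ^ k)
      (k * t ^ (k - 1) * density (G.edgeFinset.erase e) W) 0 := by
    simpa using (((hasDerivAt_id (0:ℝ)).mul_const
      (density (G.edgeFinset.erase e) W)).const_add t).fun_pow k
  have hrhs := ((shiftPoly G.edgeFinset W).hasDerivAt 0).mul_const (t ^ (k - 1))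
  have hle : ∀ᶠ s in 𝓝 (0:ℝ), (t + s * density (G.edgeFinset.erase e) W) ^ k ≤
      (shiftPoly G.edgeFinset W).eval s * t ^ (k - 1) := by
    filter_upwards [Metric.closedBall_mem_nhds (0:ℝ) hδ] with s hs
    exact perturb_edge_le hwn he hsym hm hb hδ hge (by simpa using hs)
  have heq : (t + 0 * density (G.edgeFinset.erase e) W) ^ k =
      (shiftPoly G.edgeFinset W).eval 0 * t ^ (k - 1) := by
    rw [shiftPoly_eval_zero _ hm hb, zero_mul, add_zero, ← pow_succ', Nat.sub_add_cancel
      (Nat.one_le_iff_ne_zero.mpr hk)]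
  have := hlhs.eq_of_eventuallyLE_of_eq hrhs hle heq
  rw [mul_right_comm] at this
  exact mul_right_cancel₀ (pow_pos ht _).ne' this

theorem density_erase_eq (hwn : IsWeaklyNorming G) {e₁ e₂ : Sym2 V}
    (he₁ : e₁ ∈ G.edgeFinset) (he₂ : e₂ ∈ G.edgeFinset) {h : ℝ → ℝ → ℝ}
    (hsym : ∀ a b, h a b = h b a) (hm : Measurable (Function.uncurry h))
    (hb : ∃ M, ∀ a b, |h a b| ≤ M) (h0 : ∀ a b, 0 ≤ h a b) :
    density (G.edgeFinset.erase e₁) h = density (G.edgeFinset.erase e₂) h := by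
  obtain ⟨M, hM⟩ := hb
  have hpos {δ : ℝ} (hδ : 0 < δ) : (shiftPoly (G.edgeFinset.erase e₁) h).eval δ =
      (shiftPoly (G.edgeFinset.erase e₂) h).eval δ := by
    have hsymδ : ∀ a b, h a b + δ = h b a + δ := fun a b => by rw [hsym]
    have hbδ : ∃ M, ∀ a b, |h a b + δ| ≤ M := ⟨M + δ, fun a b =>
      (abs_add_le _ _).trans (add_le_add (hM a b) (abs_of_pos hδ).le)⟩
    have hgeδ : ∀ a b, δ ≤ h a b + δ := fun a b => by linarith [h0 a b]
    have := (card_mul_density_erase hwn he₁ hsymδ (hm.add_const δ) hbδ hδ hgeδ).trans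
      (card_mul_density_erase hwn he₂ hsymδ (hm.add_const δ) hbδ hδ hgeδ).symm
    rwa [mul_right_inj' (by exact_mod_cast Finset.card_ne_zero.mpr ⟨e₁, he₁⟩),
      density_add_const _ hm ⟨M, hM⟩, density_add_const _ hm ⟨M, hM⟩] at this
  have hpoly := Polynomial.eq_of_infinite_eval_eq _ _
    ((Set.Ioi_infinite (0:ℝ)).mono fun δ hδ => hpos hδ)
  rw [← shiftPoly_eval_zero _ hm ⟨M, hM⟩, hpoly, shiftPoly_eval_zero _ hm ⟨M, hM⟩]

end IsWeaklyNorming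

/-- if `G` is weakly norming and the Lovász uniqueness theorem holds
(graphs with equal densities on all nonnegative kernels are isomorphic), then all
single-edge deletions of `G` are pairwise isomorphic. -/
theorem deletions_isomorphic {V : Type} [Fintype V] (G : SimpleGraph V)
    (hwn : ∀ (H : Sym2 V → ℝ → ℝ → ℝ) (hs : ∀ e a b, H e a b = H e b a),
      (∀ e, Measurable (Function.uncurry (H e))) → (∀ e, ∃ M, ∀ x y, |H e x y| ≤ M) →
      (∀ e x y, 0 ≤ H e x y) →
      tGm G H hs ^ G.edgeFinset.card ≤ ∏ e ∈ G.edgeFinset, tG G (H e) (hs e))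
    (hLovasz : ∀ F F' : SimpleGraph V,
      (∀ (h : ℝ → ℝ → ℝ) (hsym : ∀ a b, h a b = h b a),
        Measurable (Function.uncurry h) → (∃ M, ∀ x y, |h x y| ≤ M) →
        (∀ x y, 0 ≤ h x y) → tG F h hsym = tG F' h hsym) →
      Nonempty (F ≃g F')) :
    ∀ e₁ ∈ G.edgeSet, ∀ e₂ ∈ G.edgeSet,
      Nonempty (G.deleteEdges {e₁} ≃g G.deleteEdges {e₂}) := by
  intro e₁ he₁ e₂ he₂
  have hdel (e : Sym2 V) [Fintype (G.deleteEdges {e}).edgeSet] :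
      (G.deleteEdges {e}).edgeFinset = G.edgeFinset.erase e := by
    ext f
    simp [and_comm]
  refine hLovasz _ _ fun h hsym hm hb h0 => ?_
  rw [tG_eq_density, tG_eq_density, hdel, hdel]
  exact IsWeaklyNorming.density_erase_eq hwn (G.mem_edgeFinset.mpr he₁)
    (G.mem_edgeFinset.mpr he₂) hsym hm hb h0
end
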